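/- For positive definite matrices p, q, one has g = p ♯ q if and only if g is positive definite and q = g p^{-1} g. -/

import Mathlib

open Matrix
open scoped ComplexOrder

noncomputable def mpow {m : Type*} [Fintype m] [DecidableEq m]
    (A : Matrix m m ℂ) (t : ℝ) : Matrix m m ℂ :=
  if h : A.IsHermitian then
    (h.eigenvectorUnitary : Matrix m m ℂ) *
      Matrix.diagonal (fun i => ((h.eigenvalues i ^ t : ℝ) : ℂ)) *
      star (h.eigenvectorUnitary : Matrix m m ℂ)
  else A

/-- t-metric geometric mean `A ♯ₜ B`. -/
noncomputable def msharp {m : Type*} [Fintype m] [DecidableEq m]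
    (A B : Matrix m m ℂ) (t : ℝ) : Matrix m m ℂ :=
  mpow A (1/2) * mpow (mpow A (-(1/2)) * B * mpow A (-(1/2))) t * mpow A (1/2)

/-- t-spectral geometric mean `A ♮ₜ B`. -/
noncomputable def mnat {m : Type*} [Fintype m] [DecidableEq m]
    (A B : Matrix m m ℂ) (t : ℝ) : Matrix m m ℂ :=
  mpow (msharp A⁻¹ B (1/2)) t * A * mpow (msharp A⁻¹ B (1/2)) t

/-- Eigenvalues in non-increasing order (junk value `0` if not Hermitian). -/
noncomputable def eigsDesc {n : ℕ} (A : Matrix (Fin n) (Fin n) ℂ) : Fin n → ℝ :=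
  if h : A.IsHermitian then (fun i => h.eigenvalues (Tuple.sort h.eigenvalues i.rev)) else 0

/-- `x` is log-majorized by `y` (both listed in non-increasing order). -/
def LogMaj {n : ℕ} (x y : Fin n → ℝ) : Prop :=
  (∀ k : ℕ, ∏ i ∈ Finset.univ.filter (fun i : Fin n => (i : ℕ) < k), x i ≤
      ∏ i ∈ Finset.univ.filter (fun i : Fin n => (i : ℕ) < k), y i) ∧
    ∏ i, x i = ∏ i, y i

/-- k-th compound matrix. -/
noncomputable def compound {n : ℕ} (k : ℕ) (A : Matrix (Fin n) (Fin n) ℂ) :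
    Matrix {s : Finset (Fin n) // s.card = k} {s : Finset (Fin n) // s.card = k} ℂ :=
  fun s t => (A.submatrix (fun i => (s.1.orderIsoOfFin s.2 i : Fin n))
    (fun i => (t.1.orderIsoOfFin t.2 i : Fin n))).det

/-!
Write `s = p^{1/2}` and `t = p^{-1/2} = s⁻¹`, so that `p ♯ q = s √(t q t) s` and `p⁻¹ = t t`.
Conjugating by the Hermitian unit `t` preserves positive definiteness and turns `q = g p⁻¹ g`
into `t q t = (t g t)²`, so both sides say that `t g t` is the positive definite square root
of `t q t`, which is unique.
-/

open scoped MatrixOrder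

lemma eq_mul_mul_iff_mul_mul_eq {α : Type*} [Monoid α] {s t x y : α}
    (hst : s * t = 1) (hts : t * s = 1) : x = s * y * s ↔ t * x * t = y := by
  constructor
  · rintro rfl
    simp only [mul_assoc, hst, mul_one]
    rw [← mul_assoc, hts, one_mul]
  · rintro rfl
    simp only [mul_assoc, hts, mul_one]
    rw [← mul_assoc, hst, one_mul]

lemma mul_mul_left_right_cancel_iff {α : Type*} [Monoid α] {s t x y : α}
    (hst : s * t = 1) (hts : t * s = 1) : t * x * t = t * y * t ↔ x = y := by
  rw [← eq_mul_mul_iff_mul_mul_eq hst hts]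
  simp only [mul_assoc, hts, mul_one]
  rw [← mul_assoc, hst, one_mul]

namespace Matrix

lemma IsHermitian.posDef_conjugate_iff {n R : Type*} [Fintype n] [DecidableEq n] [Ring R]
    [PartialOrder R] [StarRing R] {t x : Matrix n n R} (ht : t.IsHermitian) (hu : IsUnit t) :
    (t * x * t).PosDef ↔ x.PosDef := by
  simpa only [star_eq_conjTranspose, ht.eq] using hu.posDef_star_left_conjugate_iff

variable {m : Type*} [Fintype m] [DecidableEq m] {A : Matrix m m ℂ}

lemma mpow_of_isHermitian (hA : A.IsHermitian) (t : ℝ) :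
    mpow A t = (hA.eigenvectorUnitary : Matrix m m ℂ) *
      diagonal (fun i => ((hA.eigenvalues i ^ t : ℝ) : ℂ)) *
      star (hA.eigenvectorUnitary : Matrix m m ℂ) :=
  dif_pos hA

namespace PosDef

protected lemma mpow (hA : A.PosDef) (t : ℝ) : (mpow A t).PosDef := by
  rw [mpow_of_isHermitian hA.isHermitian, Unitary.isUnit_coe.posDef_star_right_conjugate_iff,
    posDef_diagonal_iff]
  exact fun i => Complex.zero_lt_real.2 (Real.rpow_pos_of_pos (hA.eigenvalues_pos i) t)

lemma mpow_add (hA : A.PosDef) (s t : ℝ) : mpow A (s + t) = mpow A s * mpow A t := by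
  simp only [mpow_of_isHermitian hA.isHermitian, Matrix.mul_assoc]
  rw [← Matrix.mul_assoc (star _) _, Unitary.coe_star_mul_self, Matrix.one_mul,
    ← Matrix.mul_assoc (diagonal _), diagonal_mul_diagonal]
  congr 3 with i
  rw [← Complex.ofReal_mul, ← Real.rpow_add (hA.eigenvalues_pos i)]

lemma mpow_zero (hA : A.PosDef) : mpow A 0 = 1 := by
  simp only [mpow_of_isHermitian hA.isHermitian, Real.rpow_zero, Complex.ofReal_one,
    diagonal_one, Matrix.mul_one]
  exact Unitary.coe_mul_star_self _

lemma mpow_one (hA : A.PosDef) : mpow A 1 = A := by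
  simpa [mpow_of_isHermitian hA.isHermitian, Function.comp_def] using
    hA.isHermitian.spectral_theorem.symm

lemma mpow_mul_mpow_neg (hA : A.PosDef) (t : ℝ) : mpow A t * mpow A (-t) = 1 := by
  rw [← hA.mpow_add, add_neg_cancel, hA.mpow_zero]

lemma mpow_neg_mul_mpow (hA : A.PosDef) (t : ℝ) : mpow A (-t) * mpow A t = 1 := by
  rw [← hA.mpow_add, neg_add_cancel, hA.mpow_zero]

lemma inv_eq_mpow_neg_half_mul_self (hA : A.PosDef) :
    A⁻¹ = mpow A (-(1/2)) * mpow A (-(1/2)) := by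
  refine inv_eq_right_inv ?_
  nth_rewrite 1 [← hA.mpow_one]
  rw [← hA.mpow_add, ← hA.mpow_add]
  norm_num [hA.mpow_zero]

lemma mpow_half_mul_self (hA : A.PosDef) : mpow A (1/2) * mpow A (1/2) = A := by
  rw [← hA.mpow_add]
  norm_num [hA.mpow_one]

lemma eq_mpow_half_iff (hA : A.PosDef) {w : Matrix m m ℂ} :
    w = mpow A (1/2) ↔ w.PosDef ∧ w * w = A := by
  refine ⟨fun hw => hw ▸ ⟨hA.mpow _, hA.mpow_half_mul_self⟩, fun ⟨hw, hww⟩ => ?_⟩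
  rw [← CFC.sqrt_unique hww hw.posSemidef.nonneg,
    CFC.sqrt_unique hA.mpow_half_mul_self (hA.mpow _).posSemidef.nonneg]

end PosDef

end Matrix

theorem msharp_iff_riccati {n : ℕ} (p q g : Matrix (Fin n) (Fin n) ℂ)
    (hp : p.PosDef) (hq : q.PosDef) :
    g = msharp p q (1/2) ↔ g.PosDef ∧ q = g * p⁻¹ * g := by
  set s := mpow p (1/2)
  set t := mpow p (-(1/2))
  have hst : s * t = 1 := hp.mpow_mul_mpow_neg _
  have hts : t * s = 1 := hp.mpow_neg_mul_mpow _
  have ht : t.PosDef := hp.mpow _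
  have hconj (x : Matrix (Fin n) (Fin n) ℂ) : (t * x * t).PosDef ↔ x.PosDef :=
    ht.isHermitian.posDef_conjugate_iff ht.isUnit
  have hM : (t * q * t).PosDef := (hconj q).2 hq
  have hriccati : t * g * t * (t * g * t) = t * q * t ↔ q = g * p⁻¹ * g := by
    rw [hp.inv_eq_mpow_neg_half_mul_self, eq_comm (a := q),
      ← mul_mul_left_right_cancel_iff hst hts (x := g * (t * t) * g)]
    simp only [mul_assoc]
  calc g = msharp p q (1/2) ↔ t * g * t = mpow (t * q * t) (1/2) :=
        eq_mul_mul_iff_mul_mul_eq hst hts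
    _ ↔ (t * g * t).PosDef ∧ t * g * t * (t * g * t) = t * q * t := hM.eq_mpow_half_iff
    _ ↔ g.PosDef ∧ q = g * p⁻¹ * g := by rw [hconj, hriccati]
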